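/- arXiv:2107.03092 — 4 statements merged into one kernel-verified Lean document; each statement's English description precedes it below -/
import Mathlib

section
/- Let G be a finite directed graph. The collection of (arc sets of) all directed spanning trees of G satisfies the weak exchange property: for every pair of distinct directed spanning trees T and T' of G, there exist an arc e ∈ A(T) \ A(T') and an arc e' ∈ A(T') \ A(T) such that T − e + e' is a directed spanning tree of G. -/
/-- The vertex set of a set of arcs. -/
def arcVerts {V : Type*} [DecidableEq V] (T : Finset (V × V)) : Finset V :=
  T.image Prod.fst ∪ T.image Prod.snd

/-- The in-degree of a vertex `v` in a set of arcs `T`. -/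
def inDeg {V : Type*} [DecidableEq V] (T : Finset (V × V)) (v : V) : ℕ :=
  (T.filter fun e => e.2 = v).card

/-- The step relation of a set of arcs: `arcRel T a b` iff `(a, b)` is an arc of `T`. -/
def arcRel {V : Type*} (T : Finset (V × V)) : V → V → Prop := fun a b => (a, b) ∈ T

/-- `T` is (the arc set of) a directed tree rooted at `r`: the root has in-degree `0`,
every other vertex has in-degree exactly `1`, and every vertex is reachable from `r`. -/
def IsDirTree {V : Type*} [DecidableEq V] (T : Finset (V × V)) (r : V) : Prop :=
  inDeg T r = 0 ∧ (∀ v ∈ arcVerts T, v ≠ r → inDeg T v = 1) ∧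
    ∀ v ∈ arcVerts T, Relation.ReflTransGen (arcRel T) r v

/-- `T` is a directed spanning tree of the digraph on vertex type `V` with arc set `A`. -/
def IsDirSpanningTree {V : Type*} [DecidableEq V] (A T : Finset (V × V)) : Prop :=
  T ⊆ A ∧ ∃ r, IsDirTree T r ∧ ∀ v, v ≠ r → v ∈ arcVerts T

/-!
Both trees are arborescences (every non-root vertex has exactly one parent). If they have the same
root `r`, follow a path of `T'` from `r` until its first arc `(u, v)` outside `T`; replacing the
`T`-parent arc of `v` by `(u, v)` keeps all in-degrees and keeps `v` reachable from `r`. If the roots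
differ, the `T'`-parent `q` of the root `r` of `T` is reached from `r` by a path of `T` that cannot
lie in `T'` (that would close a cycle in `T'`); removing the last arc `(c, w)` of that path outside
`T'` and adding `(q, r)` gives an arborescence rooted at `w`.
-/

open Relation Finset

section Arborescence

variable {V : Type*}

lemma reflTransGen_arcRel_mono {S T : Finset (V × V)} (h : S ⊆ T) {a b : V}
    (hab : ReflTransGen (arcRel S) a b) : ReflTransGen (arcRel T) a b :=
  ReflTransGen.mono (fun _ _ hxy => h hxy) _ _ hab

variable [DecidableEq V]

lemma snd_mem_arcVerts {T : Finset (V × V)} {a v : V} (h : (a, v) ∈ T) : v ∈ arcVerts T :=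
  mem_union_right _ (mem_image_of_mem Prod.snd h)

lemma inDeg_eq_zero_iff {T : Finset (V × V)} {v : V} : inDeg T v = 0 ↔ ∀ a, (a, v) ∉ T := by
  simp only [inDeg, card_eq_zero, filter_eq_empty_iff, Prod.forall]
  exact ⟨fun h a ha => h a v ha rfl, fun h a b hab hb => h a (hb ▸ hab)⟩

lemma inDeg_eq_one_iff {T : Finset (V × V)} {v : V} : inDeg T v = 1 ↔ ∃! a, (a, v) ∈ T := by
  rw [inDeg, card_eq_one_iff_existsUnique]
  constructor
  · rintro ⟨⟨a, b⟩, hab, huniq⟩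
    obtain ⟨habT, rfl⟩ := mem_filter.1 hab
    exact ⟨a, habT, fun a' ha' => congrArg Prod.fst (huniq _ (mem_filter.2 ⟨ha', rfl⟩))⟩
  · rintro ⟨a, ha, huniq⟩
    refine ⟨(a, v), mem_filter.2 ⟨ha, rfl⟩, fun ⟨a', b⟩ hab => ?_⟩
    obtain ⟨habT, rfl⟩ := mem_filter.1 hab
    rw [huniq a' habT]

lemma inDeg_insert {T : Finset (V × V)} {e : V × V} (he : e ∉ T) (x : V) :
    inDeg (insert e T) x = inDeg T x + if e.2 = x then 1 else 0 := by
  unfold inDeg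
  rw [filter_insert]
  split_ifs
  · exact card_insert_of_notMem fun h => he (mem_filter.1 h).1
  · rfl

lemma inDeg_erase_add {T : Finset (V × V)} {e : V × V} (he : e ∈ T) (x : V) :
    (inDeg (T.erase e) x + if e.2 = x then 1 else 0) = inDeg T x := by
  unfold inDeg
  rw [filter_erase]
  split_ifs with hx
  · exact card_erase_add_one (mem_filter.2 ⟨he, hx⟩)
  · rw [add_zero, erase_eq_of_notMem (s := T.filter fun f => f.2 = x)
      fun h => hx (mem_filter.1 h).2]

lemma inDeg_insert_erase {T : Finset (V × V)} {e e' : V × V} (he : e ∈ T) (he' : e' ∉ T) (x : V) :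
    (inDeg (insert e' (T.erase e)) x + if e.2 = x then 1 else 0) =
      inDeg T x + if e'.2 = x then 1 else 0 := by
  rw [inDeg_insert (fun h => he' (mem_of_mem_erase h)), ← inDeg_erase_add he x]
  ring

lemma reflTransGen_inter_or_exists_exit {S P : Finset (V × V)} {a x : V}
    (h : ReflTransGen (arcRel S) a x) :
    ReflTransGen (arcRel (S ∩ P)) a x ∨ ∃ e ∈ S \ P, ReflTransGen (arcRel (S ∩ P)) a e.1 := by
  induction h with
  | refl => exact Or.inl .refl
  | @tail b c _ hbc ih =>
    rcases ih with hab | hexit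
    · by_cases hP : (b, c) ∈ P
      · exact Or.inl (hab.tail (mem_inter.2 ⟨hbc, hP⟩))
      · exact Or.inr ⟨(b, c), mem_sdiff.2 ⟨hbc, hP⟩, hab⟩
    · exact Or.inr hexit

lemma reflTransGen_inter_or_exists_entry {S P : Finset (V × V)} {a x : V}
    (h : ReflTransGen (arcRel S) a x) :
    ReflTransGen (arcRel (S ∩ P)) a x ∨ ∃ e ∈ S \ P, ReflTransGen (arcRel (S ∩ P)) e.2 x := by
  induction h with
  | refl => exact Or.inl .refl
  | @tail b c _ hbc ih =>
    by_cases hP : (b, c) ∈ P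
    · have hbc' : arcRel (S ∩ P) b c := mem_inter.2 ⟨hbc, hP⟩
      exact ih.imp (·.tail hbc') fun ⟨e, he, hb⟩ => ⟨e, he, hb.tail hbc'⟩
    · exact Or.inr ⟨(b, c), mem_sdiff.2 ⟨hbc, hP⟩, .refl⟩

structure IsArborescence (T : Finset (V × V)) (r : V) : Prop where
  inDeg_root : inDeg T r = 0
  inDeg_of_ne_root : ∀ v, v ≠ r → inDeg T v = 1
  reach : ∀ v, ReflTransGen (arcRel T) r v

lemma isDirSpanningTree_iff {A T : Finset (V × V)} :
    IsDirSpanningTree A T ↔ T ⊆ A ∧ ∃ r, IsArborescence T r := by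
  constructor
  · rintro ⟨hTA, r, ⟨h0, h1, hreach⟩, hspan⟩
    refine ⟨hTA, r, h0, fun v hv => h1 v (hspan v hv) hv, fun v => ?_⟩
    by_cases hv : v = r
    · exact hv ▸ .refl
    · exact hreach v (hspan v hv)
  · rintro ⟨hTA, r, h0, h1, hreach⟩
    refine ⟨hTA, r, ⟨h0, fun v _ hv => h1 v hv, fun v _ => hreach v⟩, fun v hv => ?_⟩
    obtain ⟨a, ha, -⟩ := inDeg_eq_one_iff.1 (h1 v hv)
    exact snd_mem_arcVerts ha

namespace IsArborescence

variable {T T' : Finset (V × V)} {r : V}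

lemma snd_ne_root (hT : IsArborescence T r) {a v : V} (h : (a, v) ∈ T) : v ≠ r :=
  fun hv => inDeg_eq_zero_iff.1 hT.inDeg_root a (hv ▸ h)

lemma existsUnique_parent (hT : IsArborescence T r) {v : V} (hv : v ≠ r) :
    ∃! a, (a, v) ∈ T :=
  inDeg_eq_one_iff.1 (hT.inDeg_of_ne_root v hv)

lemma parent_eq (hT : IsArborescence T r) {a b v : V} (ha : (a, v) ∈ T) (hb : (b, v) ∈ T) :
    a = b :=
  (hT.existsUnique_parent (hT.snd_ne_root ha)).unique ha hb

/-- Walking down from the root, a vertex on a cycle would force its unique parent onto the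
same cycle. -/
lemma not_transGen_self (hT : IsArborescence T r) (x : V) : ¬ TransGen (arcRel T) x x := by
  induction hT.reach x with
  | refl =>
    intro h
    obtain ⟨b, -, hb⟩ := TransGen.tail'_iff.1 h
    exact hT.snd_ne_root hb rfl
  | @tail b c _ hbc ih =>
    intro h
    obtain ⟨b', hcb', hb'c⟩ := TransGen.tail'_iff.1 h
    rw [hT.parent_eq hb'c hbc] at hcb'
    exact ih (TransGen.head' hbc hcb')

lemma eq_of_subset (hT : IsArborescence T r) (hT' : IsArborescence T' r) (h : T' ⊆ T) :
    T' = T := by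
  refine h.antisymm fun ⟨a, v⟩ hav => ?_
  obtain ⟨a', ha', -⟩ := hT'.existsUnique_parent (hT.snd_ne_root hav)
  rwa [← hT.parent_eq (h ha') hav]

/-- Every arc of `T` but `e` survives in `N`, so a path of `T` from `r` can be resumed at `r`
or at `e.2`. -/
lemma reflTransGen_of_erase_subset (hT : IsArborescence T r) {N : Finset (V × V)}
    {e : V × V} {ρ : V} (hN : T.erase e ⊆ N) (hr : ReflTransGen (arcRel N) ρ r)
    (he : ReflTransGen (arcRel N) ρ e.2) (x : V) : ReflTransGen (arcRel N) ρ x := by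
  induction hT.reach x with
  | refl => exact hr
  | @tail b c _ hbc ih =>
    by_cases hbce : (b, c) = e
    · subst hbce
      exact he
    · exact ih.tail (hN (mem_erase.2 ⟨hbce, hbc⟩))

lemma replace_parent (hT : IsArborescence T r) {p u v : V} (hp : (p, v) ∈ T)
    (hu : (u, v) ∉ T) (hru : ReflTransGen (arcRel (T.erase (p, v))) r u) :
    IsArborescence (insert (u, v) (T.erase (p, v))) r := by
  have hdeg x : inDeg (insert (u, v) (T.erase (p, v))) x = inDeg T x := by
    simpa using inDeg_insert_erase hp hu x
  have hrv : ReflTransGen (arcRel (insert (u, v) (T.erase (p, v)))) r v :=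
    (reflTransGen_arcRel_mono (subset_insert _ _) hru).tail (mem_insert_self _ _)
  exact ⟨hdeg r ▸ hT.inDeg_root, fun x hx => hdeg x ▸ hT.inDeg_of_ne_root x hx,
    hT.reflTransGen_of_erase_subset (subset_insert _ _) .refl hrv⟩

lemma reroot (hT : IsArborescence T r) {c w q : V} (hcw : (c, w) ∈ T)
    (hwq : ReflTransGen (arcRel (T.erase (c, w))) w q) :
    IsArborescence (insert (q, r) (T.erase (c, w))) w := by
  have hwr : w ≠ r := hT.snd_ne_root hcw
  have hdeg := inDeg_insert_erase (e' := (q, r)) hcw (fun h => hT.snd_ne_root h rfl)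
  refine ⟨?_, fun x hx => ?_, hT.reflTransGen_of_erase_subset (subset_insert _ _)
    ((reflTransGen_arcRel_mono (subset_insert _ _) hwq).tail (mem_insert_self _ _)) .refl⟩
  · simpa [hwr.symm, hT.inDeg_of_ne_root w hwr] using hdeg w
  · by_cases hxr : x = r
    · subst hxr
      simpa [Ne.symm hx, hT.inDeg_root] using hdeg x
    · simpa [Ne.symm hx, Ne.symm hxr, hT.inDeg_of_ne_root x hxr] using hdeg x

lemma exists_exchange_of_root_eq (hT : IsArborescence T r) (hT' : IsArborescence T' r)
    (hne : T ≠ T') :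
    ∃ e ∈ T \ T', ∃ e' ∈ T' \ T, IsArborescence (insert e' (T.erase e)) r := by
  obtain ⟨f, hf⟩ : (T' \ T).Nonempty :=
    sdiff_nonempty.2 fun h => hne (hT.eq_of_subset hT' h).symm
  obtain ⟨⟨u, v⟩, huv, hru⟩ : ∃ e ∈ T' \ T, ReflTransGen (arcRel (T' ∩ T)) r e.1 :=
    (reflTransGen_inter_or_exists_exit (hT'.reach f.1)).elim (⟨f, hf, ·⟩) id
  obtain ⟨huvT', huvT⟩ := mem_sdiff.1 huv
  obtain ⟨p, hp, -⟩ := hT.existsUnique_parent (hT'.snd_ne_root huvT')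
  have hpT' : (p, v) ∉ T' := fun h => huvT (hT'.parent_eq h huvT' ▸ hp)
  have hsub : T' ∩ T ⊆ T.erase (p, v) := fun e he =>
    mem_erase.2 ⟨fun h => hpT' (h ▸ (mem_inter.1 he).1), (mem_inter.1 he).2⟩
  exact ⟨(p, v), mem_sdiff.2 ⟨hp, hpT'⟩, (u, v), huv,
    hT.replace_parent hp huvT (reflTransGen_arcRel_mono hsub hru)⟩

lemma exists_exchange_of_root_ne (hT : IsArborescence T r) {r' : V}
    (hT' : IsArborescence T' r') (hrr : r ≠ r') :
    ∃ e ∈ T \ T', ∃ e' ∈ T' \ T, IsArborescence (insert e' (T.erase e)) e.2 := by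
  obtain ⟨q, hq, -⟩ := hT'.existsUnique_parent hrr
  rcases reflTransGen_inter_or_exists_entry (P := T') (hT.reach q) with hrq | ⟨⟨c, w⟩, hcw, hwq⟩
  · exact absurd (TransGen.tail' (reflTransGen_arcRel_mono inter_subset_right hrq) hq)
      (hT'.not_transGen_self r)
  · have hsub : T ∩ T' ⊆ T.erase (c, w) := fun e he =>
      mem_erase.2 ⟨fun h => (mem_sdiff.1 hcw).2 (h ▸ (mem_inter.1 he).2), (mem_inter.1 he).1⟩
    exact ⟨(c, w), hcw, (q, r), mem_sdiff.2 ⟨hq, fun h => hT.snd_ne_root h rfl⟩,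
      hT.reroot (mem_sdiff.1 hcw).1 (reflTransGen_arcRel_mono hsub hwq)⟩

end IsArborescence

end Arborescence

theorem stmt0_general {V : Type*} [DecidableEq V] (A T T' : Finset (V × V))
    (hT : IsDirSpanningTree A T) (hT' : IsDirSpanningTree A T') (hne : T ≠ T') :
    ∃ e ∈ T \ T', ∃ e' ∈ T' \ T, IsDirSpanningTree A (insert e' (T.erase e)) := by
  obtain ⟨hTA, r, hr⟩ := isDirSpanningTree_iff.1 hT
  obtain ⟨hT'A, r', hr'⟩ := isDirSpanningTree_iff.1 hT'
  obtain ⟨e, he, e', he', ρ, hρ⟩ :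
      ∃ e ∈ T \ T', ∃ e' ∈ T' \ T, ∃ ρ, IsArborescence (insert e' (T.erase e)) ρ := by
    by_cases hrr : r = r'
    · obtain ⟨e, he, e', he', h⟩ := hr.exists_exchange_of_root_eq (hrr ▸ hr') hne
      exact ⟨e, he, e', he', r, h⟩
    · obtain ⟨e, he, e', he', h⟩ := hr.exists_exchange_of_root_ne hr' hrr
      exact ⟨e, he, e', he', e.2, h⟩
  refine ⟨e, he, e', he', isDirSpanningTree_iff.2 ⟨?_, ρ, hρ⟩⟩
  exact insert_subset (hT'A (mem_sdiff.1 he').1) ((erase_subset _ _).trans hTA)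

/-- The collection of directed spanning trees of a finite digraph satisfies the
weak exchange property. -/
theorem stmt0 {V : Type*} [Fintype V] [DecidableEq V] (A T T' : Finset (V × V))
    (hT : IsDirSpanningTree A T) (hT' : IsDirSpanningTree A T') (hne : T ≠ T') :
    ∃ e ∈ T \ T', ∃ e' ∈ T' \ T, IsDirSpanningTree A (insert e' (T.erase e)) :=
  stmt0_general A T T' hT hT' hne
end

section
/- Let G be a finite directed graph and k a nonnegative integer. The collection of (arc sets of) all directed forests in G having exactly k arcs satisfies the weak exchange property: for every pair of distinct directed forests F and F' in G with |A(F)| = |A(F')| = k, there exist e ∈ A(F) \ A(F') and e' ∈ A(F') \ A(F) such that F − e + e' is a directed forest in G. -/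
/-- `F` is (the arc set of) a directed forest: every vertex has in-degree at most `1`
and there is no directed cycle. -/
def IsDirForest {V : Type*} [DecidableEq V] (F : Finset (V × V)) : Prop :=
  (∀ v, inDeg F v ≤ 1) ∧ ∀ e ∈ F, ¬ Relation.ReflTransGen (arcRel F) e.2 e.1

/-!
The exchange `F - e + p` is a forest as soon as no arc of `F - e` enters the head of `p` and
`F - e` has no path from the head of `p` back to its tail.

If some arc `p ∈ F'` has a head that no arc of `F` enters, keep that head free: an `F`-path from
the head of `p` to its tail cannot lie in the acyclic `F'`, so it uses an arc of `F \ F'`, and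
since paths into a vertex are unique when in-degrees are at most one, deleting that arc breaks
it (with no such path, any arc of `F \ F'` can go).

Otherwise every head of `F'` is a head of `F`; as heads are counted by arcs and `|F| = |F'|`,
the two forests have the same heads. Take `p ∈ F' \ F` whose head is maximal for reachability in
`F`. An `F`-path from its head to its tail would leave `F'` at some `(x, y) ∈ F \ F'`, and the
arc of `F'` into `y` would lie in `F' \ F` with a head strictly further along. So there is no
such path, and `p` replaces the arc of `F` entering its head.
-/

open Finset Relation

section
variable {V : Type*} {S T F F' : Finset (V × V)} {a b x : V}

theorem reflTransGen_arcRel_mono_s3 (h : S ⊆ T) {u v : V} (huv : ReflTransGen (arcRel S) u v) :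
    ReflTransGen (arcRel T) u v :=
  ReflTransGen.mono (fun _ _ hxy => h hxy) _ _ huv

variable [DecidableEq V]

theorem inDeg_eq_zero_iff_s3 {v : V} : inDeg S v = 0 ↔ v ∉ S.image Prod.snd := by
  simp only [inDeg, card_eq_zero, filter_eq_empty_iff, mem_image, not_exists,
    not_and]

theorem inDeg_erase {e : V × V} (he : e ∈ S) : inDeg (S.erase e) e.2 = inDeg S e.2 - 1 := by
  rw [inDeg, filter_erase, card_erase_of_mem
    (mem_filter.2 ⟨he, rfl⟩ : e ∈ S.filter fun e' => e'.2 = e.2)]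
  rfl

theorem eq_of_snd_eq_of_inDeg_le_one (hS : ∀ v, inDeg S v ≤ 1) {p q : V × V} (hp : p ∈ S)
    (hq : q ∈ S) (h : p.2 = q.2) : p = q :=
  card_le_one.1 (hS q.2) p (mem_filter.2 ⟨hp, h⟩) q (mem_filter.2 ⟨hq, rfl⟩)

theorem card_image_snd_of_inDeg_le_one (hS : ∀ v, inDeg S v ≤ 1) :
    (S.image Prod.snd).card = S.card :=
  card_image_of_injOn fun _ hp _ hq h => eq_of_snd_eq_of_inDeg_le_one hS hp hq h

theorem reflTransGen_of_reflTransGen_of_inDeg_le_one (hST : S ⊆ T) (hT : ∀ v, inDeg T v ≤ 1)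
    (hxa : (x, a) ∈ T) (hba : b ≠ a) (h : ReflTransGen (arcRel S) b a) :
    (x, a) ∈ S ∧ ReflTransGen (arcRel S) b x := by
  obtain rfl | ⟨w, hbw, hwa⟩ := h.cases_tail
  · exact absurd rfl hba
  · obtain rfl : w = x := congrArg Prod.fst (eq_of_snd_eq_of_inDeg_le_one hT (hST hwa) hxa rfl)
    exact ⟨hwa, hbw⟩

theorem reflTransGen_insert_arc {p : V × V} (hp : ¬ ReflTransGen (arcRel S) p.2 p.1) {u v : V}
    (h : ReflTransGen (arcRel (insert p S)) u v) :
    ReflTransGen (arcRel S) u v ∨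
      ReflTransGen (arcRel S) u p.1 ∧ ReflTransGen (arcRel S) p.2 v := by
  induction h with
  | refl => exact .inl .refl
  | @tail x w _ hxw ih =>
    rcases mem_insert.1 hxw with hxw | hxw
    · obtain rfl := hxw
      rcases ih with ih | ⟨_, ih⟩
      · exact .inr ⟨ih, .refl⟩
      · exact absurd ih hp
    · exact ih.imp (·.tail hxw) fun ih => ⟨ih.1, ih.2.tail hxw⟩

theorem IsDirForest.mono (hT : IsDirForest T) (h : S ⊆ T) : IsDirForest S :=
  ⟨fun v => (card_le_card (filter_subset_filter _ h)).trans (hT.1 v),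
    fun e he hp => hT.2 e (h he) (reflTransGen_arcRel_mono_s3 h hp)⟩

def CanAddArc (S : Finset (V × V)) (p : V × V) : Prop :=
  inDeg S p.2 = 0 ∧ ¬ ReflTransGen (arcRel S) p.2 p.1

theorem IsDirForest.insert {p : V × V} (hS : IsDirForest S) (hpS : CanAddArc S p) :
    IsDirForest (insert p S) := by
  obtain ⟨hp₀, hp⟩ := hpS
  refine ⟨fun v => ?_, fun e he hcyc => ?_⟩
  · unfold inDeg at hp₀ ⊢
    rw [filter_insert]
    split_ifs with hv
    · subst hv
      exact (card_insert_le _ _).trans (by omega)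
    · exact hS.1 v
  · rcases mem_insert.1 he with rfl | he
    · exact hp ((reflTransGen_insert_arc hp hcyc).elim id And.left)
    · rcases reflTransGen_insert_arc hp hcyc with hcyc | ⟨hcyc₁, hcyc₂⟩
      · exact hS.2 e he hcyc
      · exact hp ((hcyc₂.tail he).trans hcyc₁)

theorem IsDirForest.not_reflTransGen_inter (hF' : IsDirForest F') {p : V × V} (hp : p ∈ F') :
    ¬ ReflTransGen (arcRel (F ∩ F')) p.2 p.1 :=
  fun h => hF'.2 p hp (reflTransGen_arcRel_mono_s3 inter_subset_right h)

theorem reflTransGen_inter_or_exists_sdiff (h : ReflTransGen (arcRel F) b a) :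
    ReflTransGen (arcRel (F ∩ F')) b a ∨
      ∃ x y, (x, y) ∈ F \ F' ∧ ReflTransGen (arcRel F) b x := by
  induction h with
  | refl => exact .inl .refl
  | @tail x y hbx hxy ih =>
    refine ih.elim (fun ih => ?_) .inr
    by_cases hxy' : (x, y) ∈ F'
    · exact .inl (ih.tail (mem_inter.2 ⟨hxy, hxy'⟩))
    · exact .inr ⟨x, y, mem_sdiff.2 ⟨hxy, hxy'⟩, hbx⟩

theorem exists_mem_sdiff_not_reflTransGen_erase (hF : ∀ v, inDeg F v ≤ 1)
    (h : ReflTransGen (arcRel F) b a) (hn : ¬ ReflTransGen (arcRel (F ∩ F')) b a) :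
    ∃ e ∈ F \ F', ¬ ReflTransGen (arcRel (F.erase e)) b a := by
  induction h with
  | refl => exact absurd .refl hn
  | @tail x a _ hxa ih =>
    have hba : b ≠ a := by rintro rfl; exact hn .refl
    by_cases hxa' : (x, a) ∈ F'
    · obtain ⟨e, he, hbx⟩ := ih fun h => hn (h.tail (mem_inter.2 ⟨hxa, hxa'⟩))
      exact ⟨e, he, fun h => hbx
        (reflTransGen_of_reflTransGen_of_inDeg_le_one (F.erase_subset e) hF hxa hba h).2⟩
    · refine ⟨(x, a), mem_sdiff.2 ⟨hxa, hxa'⟩, fun h => ?_⟩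
      exact notMem_erase _ F
        (reflTransGen_of_reflTransGen_of_inDeg_le_one (F.erase_subset _) hF hxa hba h).1

theorem IsDirForest.exists_forall_not_transGen [Finite V] (hF : IsDirForest F) {s : Finset V}
    (hs : s.Nonempty) : ∃ b ∈ s, ∀ y ∈ s, ¬ TransGen (arcRel F) b y := by
  have hirr : Std.Irrefl (flip (TransGen (arcRel F))) := ⟨fun v hv => by
    obtain ⟨w, hvw, hwv⟩ := TransGen.tail'_iff.1 hv
    exact hF.2 (w, v) hwv hvw⟩
  have htrans : IsTrans V (flip (TransGen (arcRel F))) :=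
    ⟨fun _ _ _ h₁ h₂ => h₂.trans h₁⟩
  exact (Finite.wellFounded_of_trans_of_irrefl (flip (TransGen (arcRel F)))).has_min s hs

theorem IsDirForest.exists_exchange_of_snd_notMem_image (hF : IsDirForest F)
    (hF' : IsDirForest F') (hd : (F \ F').Nonempty) {p : V × V} (hp : p ∈ F')
    (hp₂ : p.2 ∉ F.image Prod.snd) :
    ∃ e ∈ F \ F', CanAddArc (F.erase e) p := by
  have hp₀ (e : V × V) : inDeg (F.erase e) p.2 = 0 :=
    inDeg_eq_zero_iff_s3.2 fun h => hp₂ (image_subset_image (F.erase_subset e) h)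
  by_cases hpath : ReflTransGen (arcRel F) p.2 p.1
  · obtain ⟨e, he, hcut⟩ :=
      exists_mem_sdiff_not_reflTransGen_erase hF.1 hpath (hF'.not_reflTransGen_inter hp)
    exact ⟨e, he, hp₀ e, hcut⟩
  · obtain ⟨e, he⟩ := hd
    exact ⟨e, he, hp₀ e, fun h => hpath (reflTransGen_arcRel_mono_s3 (F.erase_subset e) h)⟩

theorem IsDirForest.exists_mem_sdiff_not_reflTransGen [Finite V] (hF : IsDirForest F)
    (hF' : IsDirForest F') (hheads : F.image Prod.snd ⊆ F'.image Prod.snd)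
    (hd : (F' \ F).Nonempty) : ∃ p ∈ F' \ F, ¬ ReflTransGen (arcRel F) p.2 p.1 := by
  by_contra! hcyc
  obtain ⟨_, hb, hmax⟩ := hF.exists_forall_not_transGen (hd.image Prod.snd)
  obtain ⟨p, hp, rfl⟩ := mem_image.1 hb
  rcases reflTransGen_inter_or_exists_sdiff (F' := F') (hcyc p hp) with h | ⟨x, y, hxy, hbx⟩
  · exact hF'.not_reflTransGen_inter (mem_sdiff.1 hp).1 h
  obtain ⟨hxyF, hxyF'⟩ := mem_sdiff.1 hxy
  obtain ⟨q, hq, hqy⟩ := mem_image.1 (hheads (mem_image_of_mem Prod.snd hxyF))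
  have hqF : q ∉ F := fun hqF => hxyF' (eq_of_snd_eq_of_inDeg_le_one hF.1 hqF hxyF hqy ▸ hq)
  exact hmax y (mem_image.2 ⟨q, mem_sdiff.2 ⟨hq, hqF⟩, hqy⟩) (TransGen.tail' hbx hxyF)

theorem IsDirForest.exists_exchange_of_image_snd_subset [Finite V] (hF : IsDirForest F)
    (hF' : IsDirForest F') (hheads : F'.image Prod.snd ⊆ F.image Prod.snd)
    (hcard : F.card ≤ F'.card) (hd : (F' \ F).Nonempty) :
    ∃ e ∈ F \ F', ∃ p ∈ F' \ F, CanAddArc (F.erase e) p := by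
  have hheads_eq : F'.image Prod.snd = F.image Prod.snd :=
    eq_of_subset_of_card_le hheads <| by
      rwa [card_image_snd_of_inDeg_le_one hF.1, card_image_snd_of_inDeg_le_one hF'.1]
  obtain ⟨p, hp, hpath⟩ := hF.exists_mem_sdiff_not_reflTransGen hF' hheads_eq.superset hd
  obtain ⟨hpF', hpF⟩ := mem_sdiff.1 hp
  obtain ⟨q, hq, hqp⟩ := mem_image.1 (hheads (mem_image_of_mem Prod.snd hpF'))
  have hqF' : q ∉ F' := fun hqF' => hpF (eq_of_snd_eq_of_inDeg_le_one hF'.1 hqF' hpF' hqp ▸ hq)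
  refine ⟨q, mem_sdiff.2 ⟨hq, hqF'⟩, p, hp, ?_,
    fun h => hpath (reflTransGen_arcRel_mono_s3 (F.erase_subset q) h)⟩
  have := hF.1 q.2
  rw [← hqp, inDeg_erase hq]
  omega

end

/-- The collection of directed forests with exactly `k` arcs in a finite digraph
satisfies the weak exchange property. -/
theorem stmt3 {V : Type*} [Fintype V] [DecidableEq V] (A : Finset (V × V)) (k : ℕ)
    (F F' : Finset (V × V)) (hFA : F ⊆ A) (hF'A : F' ⊆ A)
    (hF : IsDirForest F) (hF' : IsDirForest F')
    (hkF : F.card = k) (hkF' : F'.card = k) (hne : F ≠ F') :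
    ∃ e ∈ F \ F', ∃ e' ∈ F' \ F,
      insert e' (F.erase e) ⊆ A ∧ IsDirForest (insert e' (F.erase e)) := by
  have hcard : F.card = F'.card := hkF.trans hkF'.symm
  obtain ⟨e, he, p, hp, hpF⟩ : ∃ e ∈ F \ F', ∃ p ∈ F' \ F, CanAddArc (F.erase e) p := by
    by_cases hheads : F'.image Prod.snd ⊆ F.image Prod.snd
    · refine hF.exists_exchange_of_image_snd_subset hF' hheads hcard.le ?_
      exact sdiff_nonempty.2 fun h => hne (eq_of_subset_of_card_le h hcard.le).symm
    · obtain ⟨_, hv, hvF⟩ := not_subset.1 hheads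
      obtain ⟨p, hp, rfl⟩ := mem_image.1 hv
      have hd : (F \ F').Nonempty :=
        sdiff_nonempty.2 fun h => hne (eq_of_subset_of_card_le h hcard.ge)
      obtain ⟨e, he, hpF⟩ := hF.exists_exchange_of_snd_notMem_image hF' hd hp hvF
      exact ⟨e, he, p, mem_sdiff.2 ⟨hp, fun h => hvF (mem_image_of_mem _ h)⟩, hpF⟩
  exact ⟨e, he, p, hp, insert_subset (hF'A (mem_sdiff.1 hp).1)
    ((F.erase_subset e).trans hFA), (hF.mono (F.erase_subset e)).insert hpF⟩
end

section
/- Let U be a finite set and let S ⊆ 2^U be a collection of subsets of U all having the same cardinality. Then S is tightly reconfigurable if and only if S satisfies the weak exchange property. -/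
private lemma sdiff_triangle' {U : Type*} [DecidableEq U] (A B C : Finset U) :
    (A \ C).card ≤ (A \ B).card + (B \ C).card := by
  calc (A \ C).card ≤ ((A \ B) ∪ (B \ C)).card := by
        apply Finset.card_le_card
        intro x hx
        simp only [Finset.mem_sdiff, Finset.mem_union] at *
        by_cases hB : x ∈ B
        · exact Or.inr ⟨hB, hx.2⟩
        · exact Or.inl ⟨hx.1, hB⟩
    _ ≤ (A \ B).card + (B \ C).card := Finset.card_union_le _ _

private lemma path_bound {U : Type*} [DecidableEq U] (f : ℕ → Finset U) (a : ℕ) :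
    ∀ k : ℕ, (∀ i, a ≤ i → i < a + k → (f i \ f (i + 1)).card ≤ 1) →
      (f a \ f (a + k)).card ≤ k := by
  intro k
  induction k with
  | zero => intro _; simp
  | succ n ih =>
    intro h
    have h1 : (f a \ f (a + n)).card ≤ n := ih (fun i hi hi' => h i hi (by omega))
    have h2 : (f (a + n) \ f (a + n + 1)).card ≤ 1 := h (a + n) (by omega) (by omega)
    calc (f a \ f (a + (n + 1))).card
        ≤ (f a \ f (a + n)).card + (f (a + n) \ f (a + (n + 1))).card :=
          sdiff_triangle' _ _ _
      _ ≤ n + 1 := by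
          have : a + (n + 1) = a + n + 1 := by omega
          rw [this]; omega

/-- Weak exchange implies tight reconfigurability, by induction on the distance. -/
private lemma wep_to_path {U : Type*} [DecidableEq U] (S : Set (Finset U))
    (hcard : ∀ s ∈ S, ∀ t ∈ S, s.card = t.card)
    (hex : ∀ s ∈ S, ∀ t ∈ S, s ≠ t →
        ∃ e ∈ s \ t, ∃ e' ∈ t \ s, insert e' (s.erase e) ∈ S) :
    ∀ n : ℕ, ∀ s ∈ S, ∀ t ∈ S, (s \ t).card = n →
      ∃ f : ℕ → Finset U,
        f 0 = s ∧ f n = t ∧ (∀ i ≤ n, f i ∈ S) ∧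
        (∀ i < n, (f i \ f (i + 1)).card = 1 ∧ (f (i + 1) \ f i).card = 1) := by
  intro n
  induction n with
  | zero =>
    intro s hs t ht hn
    have hst : s = t := by
      apply Finset.eq_of_subset_of_card_le
      · rw [← Finset.sdiff_eq_empty_iff_subset]
        exact Finset.card_eq_zero.mp hn
      · exact (hcard s hs t ht).ge
    exact ⟨fun _ => s, rfl, hst, fun i _ => hs, fun i hi => by omega⟩
  | succ n ih =>
    intro s hs t ht hn
    have hne : s ≠ t := by
      intro h; rw [h] at hn; simp at hn
    obtain ⟨e, he, e', he', hS1⟩ := hex s hs t ht hne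
    rw [Finset.mem_sdiff] at he he'
    set s1 := insert e' (s.erase e) with hs1def
    have hkey : s1 \ t = (s \ t).erase e := by
      ext x
      simp only [hs1def, Finset.mem_sdiff, Finset.mem_insert, Finset.mem_erase]
      constructor
      · rintro ⟨hx1 | ⟨hx2, hx3⟩, hx4⟩
        · exact absurd (hx1 ▸ he'.1) hx4
        · exact ⟨hx2, hx3, hx4⟩
      · rintro ⟨hx1, hx2, hx3⟩
        exact ⟨Or.inr ⟨hx1, hx2⟩, hx3⟩
    have hcard1 : (s1 \ t).card = n := by
      rw [hkey, Finset.card_erase_of_mem (Finset.mem_sdiff.mpr he), hn]; omega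
    obtain ⟨g, hg0, hgn, hgS, hgstep⟩ := ih s1 hS1 t ht hcard1
    refine ⟨fun i => if i = 0 then s else g (i - 1), by simp, by simp [hgn], ?_, ?_⟩
    · intro i hi
      by_cases h0 : i = 0
      · simpa [h0] using hs
      · simp only [h0, if_neg]
        exact hgS (i - 1) (by omega)
    · intro i hi
      by_cases h0 : i = 0
      · subst h0
        have hA : s \ s1 = {e} := by
          ext x
          simp only [hs1def, Finset.mem_sdiff, Finset.mem_insert, Finset.mem_erase,
            Finset.mem_singleton]
          constructor
          · rintro ⟨hx1, hx2⟩
            by_contra hxe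
            exact hx2 (Or.inr ⟨hxe, hx1⟩)
          · rintro rfl
            refine ⟨he.1, ?_⟩
            rintro (h | ⟨h1', _⟩)
            · exact he'.2 (h ▸ he.1)
            · exact h1' rfl
        have hB : s1 \ s = {e'} := by
          ext x
          simp only [hs1def, Finset.mem_sdiff, Finset.mem_insert, Finset.mem_erase,
            Finset.mem_singleton]
          constructor
          · rintro ⟨hx1 | ⟨_, hx2⟩, hx3⟩
            · exact hx1
            · exact absurd hx2 hx3
          · rintro rfl
            exact ⟨Or.inl rfl, he'.2⟩
        simp [hg0, hA, hB]
      · have h1 : i - 1 + 1 = i + 1 - 1 := by omega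
        simp only [if_neg h0, if_neg (by omega : i + 1 ≠ 0), ← h1]
        exact hgstep (i - 1) (by omega)

/-- A collection `S` of subsets of a finite set `U`, all of the same cardinality,
is tightly reconfigurable if and only if it satisfies the weak exchange property. -/
theorem stmt4 {U : Type*} [Fintype U] [DecidableEq U] (S : Set (Finset U))
    (hcard : ∀ s ∈ S, ∀ t ∈ S, s.card = t.card) :
    (∀ s ∈ S, ∀ t ∈ S, ∃ f : ℕ → Finset U,
        f 0 = s ∧ f ((s \ t).card) = t ∧ (∀ i ≤ (s \ t).card, f i ∈ S) ∧
        (∀ i < (s \ t).card, (f i \ f (i + 1)).card = 1 ∧ (f (i + 1) \ f i).card = 1)) ↔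
      (∀ s ∈ S, ∀ t ∈ S, s ≠ t →
        ∃ e ∈ s \ t, ∃ e' ∈ t \ s, insert e' (s.erase e) ∈ S) := by
  constructor
  · -- tight reconfigurability → weak exchange
    intro hpath s hs t ht hne
    obtain ⟨f, hf0, hfd, hfS, hfstep⟩ := hpath s hs t ht
    set d := (s \ t).card with hd
    have hdpos : 0 < d := by
      rw [hd, Finset.card_pos]
      rcases Finset.eq_empty_or_nonempty (s \ t) with h | h
      · exfalso
        apply hne
        apply Finset.eq_of_subset_of_card_le
        · rw [← Finset.sdiff_eq_empty_iff_subset]; exact h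
        · exact (hcard s hs t ht).ge
      · exact h
    set s1 := f 1 with hs1
    have hstep0 := hfstep 0 hdpos
    rw [hf0] at hstep0
    obtain ⟨e, hA⟩ := Finset.card_eq_one.mp hstep0.1
    obtain ⟨e', hB⟩ := Finset.card_eq_one.mp hstep0.2
    have he : e ∈ s ∧ e ∉ s1 := by
      have := hA ▸ Finset.mem_singleton_self e
      exact Finset.mem_sdiff.mp this
    have he' : e' ∈ s1 ∧ e' ∉ s := by
      have := hB ▸ Finset.mem_singleton_self e'
      exact Finset.mem_sdiff.mp this
    have hs1eq : s1 = insert e' (s.erase e) := by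
      ext x
      simp only [Finset.mem_insert, Finset.mem_erase]
      constructor
      · intro hx
        by_cases hxs : x ∈ s
        · refine Or.inr ⟨?_, hxs⟩
          rintro rfl; exact he.2 hx
        · left
          have : x ∈ s1 \ s := Finset.mem_sdiff.mpr ⟨hx, hxs⟩
          rwa [hB, Finset.mem_singleton] at this
      · rintro (rfl | ⟨hxe, hxs⟩)
        · exact he'.1
        · by_contra hx
          have : x ∈ s \ s1 := Finset.mem_sdiff.mpr ⟨hxs, hx⟩
          rw [hA, Finset.mem_singleton] at this
          exact hxe this
    -- distance bound: |s1 \ t| ≤ d - 1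
    have hbound : (s1 \ t).card ≤ d - 1 := by
      have := path_bound f 1 (d - 1) (fun i hi hi' => by
        have : i < d := by omega
        exact (hfstep i this).1.le)
      have h1d : 1 + (d - 1) = d := by omega
      rw [h1d, hfd] at this
      exact this
    have hent : e ∉ t := by
      intro het
      have hsub : s \ t ⊆ s1 \ t := by
        intro x hx
        rw [Finset.mem_sdiff] at hx ⊢
        refine ⟨?_, hx.2⟩
        rw [hs1eq, Finset.mem_insert, Finset.mem_erase]
        right
        exact ⟨fun h => hx.2 (h ▸ het), hx.1⟩
      have := Finset.card_le_card hsub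
      omega
    have he'mem : e' ∈ t := by
      by_contra he't
      have hsub : insert e' ((s \ t).erase e) ⊆ s1 \ t := by
        intro x hx
        rw [Finset.mem_insert, Finset.mem_erase, Finset.mem_sdiff] at hx
        rw [Finset.mem_sdiff]
        rcases hx with rfl | ⟨hxe, hxs, hxt⟩
        · exact ⟨he'.1, he't⟩
        · refine ⟨?_, hxt⟩
          rw [hs1eq, Finset.mem_insert, Finset.mem_erase]
          exact Or.inr ⟨hxe, hxs⟩
      have hcard2 : (insert e' ((s \ t).erase e)).card = d := by
        rw [Finset.card_insert_of_notMem (by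
          rw [Finset.mem_erase, Finset.mem_sdiff]
          rintro ⟨-, h, -⟩
          exact he'.2 h),
          Finset.card_erase_of_mem (Finset.mem_sdiff.mpr ⟨he.1, hent⟩)]
        omega
      have := Finset.card_le_card hsub
      omega
    refine ⟨e, Finset.mem_sdiff.mpr ⟨he.1, hent⟩, e', Finset.mem_sdiff.mpr ⟨he'mem, he'.2⟩, ?_⟩
    rw [← hs1eq]
    exact hfS 1 hdpos
  · -- weak exchange → tight reconfigurability
    intro hex s hs t ht
    exact wep_to_path S hcard hex (s \ t).card s hs t ht rfl
end

section
/- Let G be a finite directed graph, r a vertex of G, and k a positive integer. For every pair of r-directed trees T and T' in G with |A(T)| = |A(T')| = k, there exists a reconfiguration sequence ⟨T = T_0, T_1, …, T_ℓ = T'⟩ in which every T_i is an r-directed tree in G with k arcs, and whose length ℓ is at most k. -/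
/-!
Starting from `F = ∅`, grow a common subtree `F` of the current tree `T` and the target `T'`.
Some arc `(u, v)` of `T' \ F` has its tail reachable from `r` inside `F`. If it already lies in
`T` it joins `F` at no cost; otherwise one exchange brings it into `T` without touching `F`: when
`v` is a vertex of `T`, its in-arc is replaced by `(u, v)`, reattaching the subtree below `v` at
`u`; when it is not, a leaf arc of `T` outside `F` is dropped and `(u, v)` is added as a new leaf.
Each exchange adds an arc of `T'` to `F`, so there are at most `|T'| = k` of them.
-/

open Relation Finset

theorem Relation.ReflTransGen.exists_rel_of_not {α : Type*} {R : α → α → Prop} {p : α → Prop}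
    {a b : α} (h : ReflTransGen R a b) (ha : p a) (hb : ¬ p b) :
    ∃ x y, p x ∧ ¬ p y ∧ R x y := by
  induction h with
  | refl => exact absurd ha hb
  | @tail c d _ hcd ih =>
    by_cases hc : p c
    · exact ⟨c, d, hc, hb, hcd⟩
    · exact ih hc

section Reconfiguration

variable {α : Type*} [DecidableEq α]

def ReconfWithin (P : Finset α → Prop) (n : ℕ) (S S' : Finset α) : Prop :=
  ∃ ℓ ≤ n, ∃ f : ℕ → Finset α, f 0 = S ∧ f ℓ = S' ∧ (∀ i ≤ ℓ, P (f i)) ∧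
    ∀ i < ℓ, (f i \ f (i + 1)).card = 1 ∧ (f (i + 1) \ f i).card = 1

variable {P : Finset α → Prop} {m n : ℕ} {S N S' : Finset α}

theorem ReconfWithin.refl (hS : P S) (n : ℕ) : ReconfWithin P n S S :=
  ⟨0, n.zero_le, fun _ => S, rfl, rfl, fun _ _ => hS, fun _ h => absurd h (Nat.not_lt_zero _)⟩

theorem ReconfWithin.mono (h : ReconfWithin P m S S') (hmn : m ≤ n) : ReconfWithin P n S S' :=
  let ⟨ℓ, hℓ, hf⟩ := h
  ⟨ℓ, hℓ.trans hmn, hf⟩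

theorem ReconfWithin.cons (hS : P S) (hSN : #(S \ N) = 1) (hNS : #(N \ S) = 1)
    (h : ReconfWithin P n N S') : ReconfWithin P (n + 1) S S' := by
  obtain ⟨ℓ, hℓ, f, rfl, hfℓ, hP, hstep⟩ := h
  refine ⟨ℓ + 1, by omega, fun | 0 => S | i + 1 => f i, rfl, hfℓ, ?_, ?_⟩
  · rintro (_ | i) hi
    exacts [hS, hP i (by omega)]
  · rintro (_ | i) hi
    exacts [⟨hSN, hNS⟩, hstep i (by omega)]

theorem card_sdiff_insert_erase {a e : α} (he : e ∈ S) (ha : a ∉ S) :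
    #(S \ insert a (S.erase e)) = 1 ∧ #(insert a (S.erase e) \ S) = 1 := by
  have hae : a ≠ e := ne_of_mem_of_not_mem he ha |>.symm
  constructor <;> rw [card_eq_one]
  · refine ⟨e, ?_⟩
    ext x
    simp only [mem_sdiff, mem_insert, mem_erase, mem_singleton]
    constructor
    · rintro ⟨hx, hxa⟩
      by_contra hxe
      exact hxa (Or.inr ⟨hxe, hx⟩)
    · rintro rfl
      exact ⟨he, by simp [hae.symm]⟩
  · refine ⟨a, ?_⟩
    ext x
    simp only [mem_sdiff, mem_insert, mem_erase, mem_singleton]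
    constructor
    · rintro ⟨hx | hx, hxS⟩
      exacts [hx, absurd hx.2 hxS]
    · rintro rfl
      exact ⟨Or.inl rfl, ha⟩

end Reconfiguration

section DirTree

variable {V : Type*} {A T T' F X : Finset (V × V)} {r u v y : V} {e : V × V} {k : ℕ}

theorem reflTransGen_arcRel_mono_s5 {N : Finset (V × V)} (h : T ⊆ N)
    (hy : ReflTransGen (arcRel T) r y) : ReflTransGen (arcRel N) r y :=
  ReflTransGen.mono (fun _ _ hxy => h hxy) _ _ hy

variable [DecidableEq V]

theorem eq_or_mem_image_snd_of_reflTransGen (h : ReflTransGen (arcRel T) r y) :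
    y = r ∨ y ∈ T.image Prod.snd := by
  rcases h.cases_tail with h | ⟨c, -, hc⟩
  · exact Or.inl h
  · exact Or.inr (mem_image.2 ⟨(c, y), hc, rfl⟩)

theorem isDirTree_iff :
    IsDirTree T r ↔ (∀ a ∈ T, a.2 ≠ r) ∧ Set.InjOn Prod.snd (T : Set (V × V)) ∧
      ∀ a ∈ T, ReflTransGen (arcRel T) r a.1 := by
  have hdeg0 : ∀ v, inDeg T v = 0 ↔ ∀ a ∈ T, a.2 ≠ v := by
    simp [inDeg, filter_eq_empty_iff]
  constructor
  · rintro ⟨hr, hdeg, hreach⟩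
    have hr' := (hdeg0 r).1 hr
    refine ⟨hr', fun a ha b hb hab => ?_,
      fun a ha => hreach _ (mem_union_left _ (mem_image_of_mem _ ha))⟩
    have hdega : inDeg T a.2 = 1 :=
      hdeg _ (mem_union_right _ (mem_image_of_mem _ ha)) (hr' a ha)
    exact card_le_one.1 hdega.le a (mem_filter.2 ⟨ha, rfl⟩) b (mem_filter.2 ⟨hb, hab.symm⟩)
  · rintro ⟨hr, hinj, hreach⟩
    have hreach' : ∀ v ∈ arcVerts T, ReflTransGen (arcRel T) r v := by
      simp only [arcVerts, mem_union, mem_image]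
      rintro v (⟨a, ha, rfl⟩ | ⟨a, ha, rfl⟩)
      · exact hreach a ha
      · exact (hreach a ha).tail ha
    refine ⟨(hdeg0 r).2 hr, fun v hv hvr => le_antisymm ?_ ?_, hreach'⟩
    · refine card_le_one.2 fun a ha b hb => ?_
      rw [mem_filter] at ha hb
      exact hinj ha.1 hb.1 (ha.2.trans hb.2.symm)
    · obtain ⟨c, -, hcv⟩ := (hreach' v hv).cases_tail.resolve_left hvr
      exact card_pos.2 ⟨(c, v), mem_filter.2 ⟨hcv, rfl⟩⟩

theorem IsDirTree.empty : IsDirTree (∅ : Finset (V × V)) r :=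
  isDirTree_iff.2 ⟨by simp, by simp, by simp⟩

theorem IsDirTree.eq_or_mem_image_snd (hT : IsDirTree T r) (hv : v ∈ arcVerts T) :
    v = r ∨ v ∈ T.image Prod.snd :=
  eq_or_mem_image_snd_of_reflTransGen (hT.2.2 v hv)

theorem IsDirTree.insert_leaf (hT : IsDirTree T r) (hu : ReflTransGen (arcRel T) r u)
    (hv : v ∉ arcVerts T) (hvr : v ≠ r) : IsDirTree (insert (u, v) T) r := by
  obtain ⟨hr, hinj, hreach⟩ := isDirTree_iff.1 hT
  have hmono : ∀ {y}, ReflTransGen (arcRel T) r y → ReflTransGen (arcRel (insert (u, v) T)) r y :=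
    reflTransGen_arcRel_mono_s5 (subset_insert _ _)
  have hvT : v ∉ T.image Prod.snd := fun h => hv (mem_union_right _ h)
  refine isDirTree_iff.2 ⟨?_, ?_, ?_⟩
  · exact (forall_mem_insert _ _ _).2 ⟨hvr, hr⟩
  · rw [coe_insert, Set.injOn_insert fun h => hvT (mem_image_of_mem _ h), ← coe_image]
    exact ⟨hinj, hvT⟩
  · exact (forall_mem_insert _ _ _).2 ⟨hmono hu, fun a ha => hmono (hreach a ha)⟩

theorem IsDirTree.erase_leaf (hT : IsDirTree T r) (hleaf : ∀ a ∈ T, a.1 ≠ e.2) :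
    IsDirTree (T.erase e) r := by
  obtain ⟨hr, hinj, hreach⟩ := isDirTree_iff.1 hT
  have hpath : ∀ {y}, ReflTransGen (arcRel T) r y → y ≠ e.2 →
      ReflTransGen (arcRel (T.erase e)) r y := by
    intro y h
    induction h with
    | refl => exact fun _ => .refl
    | @tail c d _ hcd ih =>
      intro hd
      exact (ih (hleaf _ hcd)).tail (mem_erase.2 ⟨fun h => hd (by rw [← h]), hcd⟩)
  refine isDirTree_iff.2 ⟨fun a ha => hr a (mem_of_mem_erase ha),
    hinj.mono (coe_subset.2 (erase_subset _ _)), fun a ha => ?_⟩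
  exact hpath (hreach a (mem_of_mem_erase ha)) (hleaf a (mem_of_mem_erase ha))

theorem IsDirTree.reattach (hT : IsDirTree T r) (he : e ∈ T)
    (hu : ReflTransGen (arcRel (T.erase e)) r u) :
    IsDirTree (insert (u, e.2) (T.erase e)) r := by
  obtain ⟨hr, hinj, hreach⟩ := isDirTree_iff.1 hT
  set N := insert (u, e.2) (T.erase e)
  have hmono : ∀ {y}, ReflTransGen (arcRel (T.erase e)) r y → ReflTransGen (arcRel N) r y :=
    reflTransGen_arcRel_mono_s5 (subset_insert _ _)
  have hv : ReflTransGen (arcRel N) r e.2 := (hmono hu).tail (mem_insert_self _ _)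
  have hpath : ∀ {y}, ReflTransGen (arcRel T) r y → ReflTransGen (arcRel N) r y := by
    intro y h
    induction h with
    | refl => exact .refl
    | @tail c d _ hcd ih =>
      by_cases hce : (c, d) = e
      · rw [show d = e.2 by rw [← hce]]
        exact hv
      · exact ih.tail (mem_insert_of_mem (mem_erase.2 ⟨hce, hcd⟩))
  have hvT : e.2 ∉ (T.erase e).image Prod.snd := by
    rw [mem_image]
    rintro ⟨a, ha, hae⟩
    exact (mem_erase.1 ha).1 (hinj (mem_of_mem_erase ha) he hae)
  refine isDirTree_iff.2 ⟨?_, ?_, ?_⟩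
  · exact (forall_mem_insert _ _ _).2 ⟨hr e he, fun a ha => hr a (mem_of_mem_erase ha)⟩
  · rw [coe_insert, Set.injOn_insert (a := (u, e.2)) fun h => hvT (mem_image.2 ⟨_, h, rfl⟩),
      ← coe_image]
    exact ⟨hinj.mono (coe_subset.2 (erase_subset _ _)), hvT⟩
  · exact (forall_mem_insert _ _ _).2 ⟨hmono hu, fun a ha => hpath (hreach a (mem_of_mem_erase ha))⟩

theorem IsDirTree.exists_leaf_of_subset (hT : IsDirTree T r) (hXT : X ⊆ T) (hX : X.Nonempty) :
    ∃ e ∈ X, ∀ a ∈ X, a.1 ≠ e.2 := by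
  obtain ⟨hr, hinj, hreach⟩ := isDirTree_iff.1 hT
  by_contra! h
  -- Heads of `X` are distinct, so if each is a tail of `X` then each tail of `X` is a head of
  -- `X`: following in-arcs backwards from any arc of `X` never reaches `r`.
  have htails : X.image Prod.fst = X.image Prod.snd := by
    refine (eq_of_subset_of_card_le ?_ ?_).symm
    · intro _ hx
      obtain ⟨e, he, rfl⟩ := mem_image.1 hx
      obtain ⟨a, ha, hae⟩ := h e he
      exact mem_image.2 ⟨a, ha, hae⟩
    · rw [card_image_of_injOn (hinj.mono (coe_subset.2 hXT))]
      exact card_image_le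
  have hnot : ∀ {y}, ReflTransGen (arcRel T) r y → y ∉ X.image Prod.snd := by
    intro y hy
    induction hy with
    | refl =>
      rw [mem_image]
      rintro ⟨a, ha, har⟩
      exact hr a (hXT ha) har
    | @tail c d _ hcd ih =>
      rw [mem_image]
      rintro ⟨a, ha, had⟩
      rw [hinj (hXT ha) hcd had] at ha
      exact ih (htails ▸ mem_image_of_mem Prod.fst ha)
  obtain ⟨e, he⟩ := hX
  exact hnot (hreach e (hXT he)) (htails ▸ mem_image_of_mem Prod.fst he)

theorem IsDirTree.exists_leaf_not_mem (hT : IsDirTree T r) (hF : IsDirTree F r) (hFT : F ⊂ T) :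
    ∃ e ∈ T, e ∉ F ∧ ∀ a ∈ T, a.1 ≠ e.2 := by
  obtain ⟨hr, hinj, -⟩ := isDirTree_iff.1 hT
  obtain ⟨e, he, hleaf⟩ :=
    hT.exists_leaf_of_subset sdiff_subset (sdiff_nonempty.2 hFT.not_subset)
  obtain ⟨heT, heF⟩ := mem_sdiff.1 he
  refine ⟨e, heT, heF, fun a ha hae => ?_⟩
  by_cases haF : a ∈ F
  · -- the tail of an arc of `F` is `r` or the head of an arc of `F`, which would have to be `e`
    rcases eq_or_mem_image_snd_of_reflTransGen ((isDirTree_iff.1 hF).2.2 a haF) with h | h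
    · exact hr e heT (hae ▸ h)
    · obtain ⟨f, hf, hfa⟩ := mem_image.1 h
      exact heF (hinj (hFT.subset hf) heT (hfa.trans hae) ▸ hf)
  · exact hleaf a (mem_sdiff.2 ⟨ha, haF⟩) hae

theorem IsDirTree.exists_frontier_arc (hT : IsDirTree T r) (hTF : ¬ T ⊆ F) :
    ∃ u v, (u, v) ∈ T ∧ (u, v) ∉ F ∧ ReflTransGen (arcRel F) r u := by
  obtain ⟨b, hbT, hbF⟩ := not_subset.1 hTF
  by_cases hb : ReflTransGen (arcRel F) r b.1
  · exact ⟨b.1, b.2, hbT, hbF, hb⟩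
  · obtain ⟨u, v, hu, hv, huv⟩ := ((isDirTree_iff.1 hT).2.2 b hbT).exists_rel_of_not .refl hb
    exact ⟨u, v, huv, fun h => hv (hu.tail h), hu⟩

theorem IsDirTree.exists_swap (hT' : IsDirTree T' r) (hF : IsDirTree F r)
    (hT : IsDirTree T r) (hFT' : F ⊆ T') (hFT : F ⊂ T) (huv : (u, v) ∈ T') (huvT : (u, v) ∉ T)
    (hu : ReflTransGen (arcRel F) r u) :
    ∃ e ∈ T, e ∉ F ∧ IsDirTree (insert (u, v) (T.erase e)) r := by
  obtain ⟨hr', hinj', -⟩ := isDirTree_iff.1 hT'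
  have hFerase : ∀ {e}, e ∉ F → F ⊆ T.erase e := fun he a ha =>
    mem_erase.2 ⟨ne_of_mem_of_not_mem ha he, hFT.subset ha⟩
  by_cases hv : v ∈ arcVerts T
  · obtain ⟨e, he, rfl⟩ := mem_image.1 ((hT.eq_or_mem_image_snd hv).resolve_left (hr' _ huv))
    have heF : e ∉ F := fun heF => huvT (hinj' huv (hFT' heF) rfl ▸ he)
    exact ⟨e, he, heF, hT.reattach he (reflTransGen_arcRel_mono_s5 (hFerase heF) hu)⟩
  · obtain ⟨e, he, heF, hleaf⟩ := hT.exists_leaf_not_mem hF hFT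
    have hvT : v ∉ arcVerts (T.erase e) := fun h =>
      hv (union_subset_union (image_subset_image (erase_subset _ _))
        (image_subset_image (erase_subset _ _)) h)
    exact ⟨e, he, heF, (hT.erase_leaf hleaf).insert_leaf
      (reflTransGen_arcRel_mono_s5 (hFerase heF) hu) hvT (hr' _ huv)⟩

def IsDirTreeIn (A : Finset (V × V)) (r : V) (k : ℕ) (S : Finset (V × V)) : Prop :=
  S ⊆ A ∧ IsDirTree S r ∧ S.card = k

theorem IsDirTreeIn.insert_erase {a : V × V} (hT : IsDirTreeIn A r k T) (he : e ∈ T)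
    (haA : a ∈ A) (haT : a ∉ T) (hN : IsDirTree (insert a (T.erase e)) r) :
    IsDirTreeIn A r k (insert a (T.erase e)) := by
  refine ⟨insert_subset haA ((erase_subset _ _).trans hT.1), hN, ?_⟩
  rw [card_insert_of_notMem fun h => haT (mem_of_mem_erase h), card_erase_of_mem he,
    Nat.sub_add_cancel (card_pos.2 ⟨e, he⟩), hT.2.2]

theorem IsDirTree.reconfWithin_of_subtree (hT'A : T' ⊆ A) (hT' : IsDirTree T' r)
    (hkT' : T'.card = k) (n : ℕ) (hn : #(T' \ F) ≤ n) (hF : IsDirTree F r) (hFT' : F ⊆ T')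
    (hFT : F ⊆ T) (hT : IsDirTreeIn A r k T) : ReconfWithin (IsDirTreeIn A r k) n T T' := by
  have hdone : ∀ {F T n}, T' ⊆ F → F ⊆ T → IsDirTreeIn A r k T →
      ReconfWithin (IsDirTreeIn A r k) n T T' := fun hT'F hFT hT => by
    rw [eq_of_subset_of_card_le (hT'F.trans hFT) (hT.2.2.trans hkT'.symm).le]
    exact .refl hT _
  induction n generalizing F T with
  | zero => exact hdone (sdiff_eq_empty_iff_subset.1 (card_eq_zero.1 (Nat.le_zero.1 hn))) hFT hT
  | succ n ih =>
    by_cases hT'F : T' ⊆ F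
    · exact hdone hT'F hFT hT
    obtain ⟨u, v, huv, huvF, hu⟩ := hT'.exists_frontier_arc hT'F
    obtain ⟨hr', hinj', -⟩ := isDirTree_iff.1 hT'
    have hvF : v ∉ arcVerts F := fun hv => by
      obtain ⟨f, hf, hfv⟩ := mem_image.1 ((hF.eq_or_mem_image_snd hv).resolve_left (hr' _ huv))
      exact huvF (hinj' (hFT' hf) huv hfv ▸ hf)
    have hF' : IsDirTree (insert (u, v) F) r := hF.insert_leaf hu hvF (hr' _ huv)
    have hF'T' : insert (u, v) F ⊆ T' := insert_subset huv hFT'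
    have hn' : #(T' \ insert (u, v) F) ≤ n := by
      rw [sdiff_insert, card_erase_of_mem (mem_sdiff.2 ⟨huv, huvF⟩)]
      omega
    by_cases huvT : (u, v) ∈ T
    · exact (ih hn' hF' hF'T' (insert_subset huvT hFT) hT).mono n.le_succ
    have hFT_ss : F ⊂ T := hFT.ssubset_of_ne fun h =>
      huvF (eq_of_subset_of_card_le hFT' (by rw [h, hT.2.2, hkT']) ▸ huv)
    obtain ⟨e, he, heF, hN⟩ := hT'.exists_swap hF hT.2.1 hFT' hFT_ss huv huvT hu
    have hFN : insert (u, v) F ⊆ insert (u, v) (T.erase e) :=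
      insert_subset_insert _ fun a ha => mem_erase.2 ⟨ne_of_mem_of_not_mem ha heF, hFT ha⟩
    obtain ⟨hTN, hNT⟩ := card_sdiff_insert_erase he huvT
    exact .cons hT hTN hNT
      (ih hn' hF' hF'T' hFN (hT.insert_erase he (hT'A huv) huvT hN))

end DirTree

theorem stmt5_general {V : Type*} [DecidableEq V] (A : Finset (V × V)) (r : V)
    (k : ℕ) (T T' : Finset (V × V))
    (hTA : T ⊆ A) (hT'A : T' ⊆ A) (hT : IsDirTree T r) (hT' : IsDirTree T' r)
    (hkT : T.card = k) (hkT' : T'.card = k) :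
    ∃ ℓ ≤ k, ∃ f : ℕ → Finset (V × V), f 0 = T ∧ f ℓ = T' ∧
      (∀ i ≤ ℓ, f i ⊆ A ∧ IsDirTree (f i) r ∧ (f i).card = k) ∧
      (∀ i < ℓ, (f i \ f (i + 1)).card = 1 ∧ (f (i + 1) \ f i).card = 1) :=
  hT'.reconfWithin_of_subtree hT'A hkT' k (by rw [sdiff_empty, hkT']) .empty (empty_subset _)
    (empty_subset _) ⟨hTA, hT, hkT⟩

/-- Any two `r`-directed trees with `k` arcs in a finite digraph are connected by a
reconfiguration sequence of `r`-directed trees with `k` arcs, of length at most `k`. -/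
theorem stmt5 {V : Type*} [Fintype V] [DecidableEq V] (A : Finset (V × V)) (r : V)
    (k : ℕ) (hk : 0 < k) (T T' : Finset (V × V))
    (hTA : T ⊆ A) (hT'A : T' ⊆ A) (hT : IsDirTree T r) (hT' : IsDirTree T' r)
    (hkT : T.card = k) (hkT' : T'.card = k) :
    ∃ ℓ ≤ k, ∃ f : ℕ → Finset (V × V), f 0 = T ∧ f ℓ = T' ∧
      (∀ i ≤ ℓ, f i ⊆ A ∧ IsDirTree (f i) r ∧ (f i).card = k) ∧
      (∀ i < ℓ, (f i \ f (i + 1)).card = 1 ∧ (f (i + 1) \ f i).card = 1) :=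
  stmt5_general A r k T T' hTA hT'A hT hT' hkT hkT'
end
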